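/- arXiv:2502.19334 — 5 statements merged into one kernel-verified Lean document; each statement's English description precedes it below -/
import Mathlib

section
/- Let n1 ≥ 1 and n2 ≥ 1, let C1 : Fin n1 → Fin n1 → ℝ satisfy C1 x x = 0 for all x, let C2 : Fin n2 → Fin n2 → ℝ satisfy C2 y y = 0 for all y, and let S : Fin n1 → Fin n2 → ℝ satisfy S x y > 0 for all x, y. If ∑_{x1,x2 ∈ Fin n1} ∑_{y1,y2 ∈ Fin n2} (C1 x1 x2 − C2 y1 y2)² · S x1 y1 · S x2 y2 = 0, then C1 x1 x2 = 0 for all x1, x2 and C2 y1 y2 = 0 for all y1, y2. -/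
/-!
Every summand of the Gromov–Wasserstein cost is a square times two positive entries of `S`,
so a vanishing cost forces `C1 x1 x2 = C2 y1 y2` for all indices: both cost matrices are one
and the same constant. Evaluating on the diagonal of either, where it is zero, shows that this
constant is `0`.
-/

def gromovWassersteinCost {α β : Type*} [Fintype α] [Fintype β]
    (C1 : α → α → ℝ) (C2 : β → β → ℝ) (S : α → β → ℝ) : ℝ :=
  ∑ x1, ∑ x2, ∑ y1, ∑ y2, (C1 x1 x2 - C2 y1 y2) ^ 2 * S x1 y1 * S x2 y2

theorem gromovWassersteinCost_eq_zero_iff {α β : Type*} [Fintype α] [Fintype β]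
    {C1 : α → α → ℝ} {C2 : β → β → ℝ} {S : α → β → ℝ} (hS : ∀ x y, 0 < S x y) :
    gromovWassersteinCost C1 C2 S = 0 ↔ ∀ x1 x2 y1 y2, C1 x1 x2 = C2 y1 y2 := by
  set f : α × α × β × β → ℝ := fun p =>
    (C1 p.1 p.2.1 - C2 p.2.2.1 p.2.2.2) ^ 2 * S p.1 p.2.2.1 * S p.2.1 p.2.2.2
  have hf_nonneg : ∀ p, 0 ≤ f p := fun p => by
    have := hS p.1 p.2.2.1
    have := hS p.2.1 p.2.2.2
    positivity
  have hf_eq_zero : ∀ p, f p = 0 ↔ C1 p.1 p.2.1 = C2 p.2.2.1 p.2.2.2 := fun p => by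
    simp [f, (hS _ _).ne', sub_eq_zero]
  have hcost : gromovWassersteinCost C1 C2 S = ∑ p, f p := by
    simp only [gromovWassersteinCost, f, Fintype.sum_prod_type]
  rw [hcost, Fintype.sum_eq_zero_iff_of_nonneg hf_nonneg, funext_iff]
  simp only [Pi.zero_apply, hf_eq_zero, Prod.forall]

theorem gw_term_zero_collapse (n1 n2 : ℕ) (hn1 : 1 ≤ n1) (hn2 : 1 ≤ n2)
    (C1 : Fin n1 → Fin n1 → ℝ) (C2 : Fin n2 → Fin n2 → ℝ)
    (hC1 : ∀ x, C1 x x = 0) (hC2 : ∀ y, C2 y y = 0)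
    (S : Fin n1 → Fin n2 → ℝ) (hS : ∀ x y, S x y > 0)
    (hzero : (∑ x1 : Fin n1, ∑ x2 : Fin n1, ∑ y1 : Fin n2, ∑ y2 : Fin n2,
        (C1 x1 x2 - C2 y1 y2) ^ 2 * S x1 y1 * S x2 y2) = 0) :
    (∀ x1 x2, C1 x1 x2 = 0) ∧ (∀ y1 y2, C2 y1 y2 = 0) := by
  have hC : ∀ x1 x2 y1 y2, C1 x1 x2 = C2 y1 y2 :=
    (gromovWassersteinCost_eq_zero_iff hS).mp hzero
  refine ⟨fun x1 x2 => ?_, fun y1 y2 => ?_⟩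
  · rw [hC x1 x2 ⟨0, hn2⟩ ⟨0, hn2⟩, hC2]
  · rw [← hC ⟨0, hn1⟩ ⟨0, hn1⟩ y1 y2, hC1]
end

section
/- Let n1, n2, d be positive integers, let E1 : Fin n1 → EuclideanSpace ℝ (Fin d) and E2 : Fin n2 → EuclideanSpace ℝ (Fin d) be node embeddings, and define the cost matrices M x y = ‖E1 x − E2 y‖², C1 x x' = ‖E1 x − E1 x'‖², C2 y y' = ‖E2 y − E2 y'‖². Let S : Fin n1 → Fin n2 → ℝ satisfy S x y > 0 for all x, y, and let α ∈ ℝ with 0 < α < 1. Then (1−α)·∑_{x,y} M x y · S x y + α·∑_{x,x',y,y'} (C1 x x' − C2 y y')² · S x y · S x' y' = 0 if and only if E1 x = E2 y for all x ∈ Fin n1 and y ∈ Fin n2 (embedding collapse). -/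
/-!
The Wasserstein part of the objective is a positively weighted sum of the squared distances
`‖E1 x - E2 y‖²`, and the Gromov–Wasserstein part is nonnegative. With both trade-off weights
`1 - α` and `α` positive, the objective vanishes only if the Wasserstein part does, i.e. only if
every `E1 x` equals every `E2 y`. Conversely, once all embeddings coincide, every cost vanishes.
-/

open Finset

theorem mul_add_mul_eq_zero_iff_of_pos {p q a b : ℝ} (hp : 0 < p) (hq : 0 < q)
    (ha : 0 ≤ a) (hb : 0 ≤ b) : p * a + q * b = 0 ↔ a = 0 ∧ b = 0 := by
  rw [add_eq_zero_iff_of_nonneg (by positivity) (by positivity),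
    mul_eq_zero_iff_left hp.ne', mul_eq_zero_iff_left hq.ne']

theorem sum_sum_mul_eq_zero_iff_of_pos {ι κ : Type*} [Fintype ι] [Fintype κ]
    {c w : ι → κ → ℝ} (hc : ∀ i j, 0 ≤ c i j) (hw : ∀ i j, 0 < w i j) :
    ∑ i, ∑ j, c i j * w i j = 0 ↔ ∀ i j, c i j = 0 := by
  have hterm : ∀ i j, 0 ≤ c i j * w i j := fun i j => mul_nonneg (hc i j) (hw i j).le
  simp only [sum_eq_zero_iff_of_nonneg (fun i _ => sum_nonneg fun j _ => hterm i j),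
    sum_eq_zero_iff_of_nonneg (fun j _ => hterm _ j), mem_univ, true_implies,
    mul_eq_zero_iff_right (hw _ _).ne']

theorem fgw_zero_iff_embedding_collapse_general (n1 n2 d : ℕ)
    (E1 : Fin n1 → EuclideanSpace ℝ (Fin d)) (E2 : Fin n2 → EuclideanSpace ℝ (Fin d))
    (M : Fin n1 → Fin n2 → ℝ) (hM : ∀ x y, M x y = ‖E1 x - E2 y‖ ^ 2)
    (C1 : Fin n1 → Fin n1 → ℝ) (hC1 : ∀ x x', C1 x x' = ‖E1 x - E1 x'‖ ^ 2)
    (C2 : Fin n2 → Fin n2 → ℝ) (hC2 : ∀ y y', C2 y y' = ‖E2 y - E2 y'‖ ^ 2)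
    (S : Fin n1 → Fin n2 → ℝ) (hS : ∀ x y, S x y > 0)
    (α : ℝ) (hα0 : 0 < α) (hα1 : α < 1) :
    (1 - α) * (∑ x : Fin n1, ∑ y : Fin n2, M x y * S x y) +
        α * (∑ x : Fin n1, ∑ x' : Fin n1, ∑ y : Fin n2, ∑ y' : Fin n2,
          (C1 x x' - C2 y y') ^ 2 * S x y * S x' y') = 0 ↔
      ∀ x y, E1 x = E2 y := by
  have hM_nonneg : ∀ x y, 0 ≤ M x y := fun x y => hM x y ▸ sq_nonneg _
  have hGW_nonneg : 0 ≤ ∑ x : Fin n1, ∑ x' : Fin n1, ∑ y : Fin n2, ∑ y' : Fin n2,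
      (C1 x x' - C2 y y') ^ 2 * S x y * S x' y' :=
    sum_nonneg fun x _ => sum_nonneg fun x' _ => sum_nonneg fun y _ => sum_nonneg fun y' _ =>
      mul_nonneg (mul_nonneg (sq_nonneg _) (hS x y).le) (hS x' y').le
  have hM_eq_zero_iff : ∀ x y, M x y = 0 ↔ E1 x = E2 y := by
    simp [hM, sub_eq_zero]
  rw [mul_add_mul_eq_zero_iff_of_pos (sub_pos.2 hα1) hα0
      (sum_nonneg fun x _ => sum_nonneg fun y _ => mul_nonneg (hM_nonneg x y) (hS x y).le)
      hGW_nonneg, sum_sum_mul_eq_zero_iff_of_pos hM_nonneg hS]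
  simp only [hM_eq_zero_iff]
  refine ⟨And.left, fun hE => ⟨hE, ?_⟩⟩
  have hC : ∀ x x' y y', C1 x x' - C2 y y' = 0 := fun x x' y y' => by
    rw [hC1, hC2, hE x y, hE x' y', sub_self]
  simp [hC]

theorem fgw_zero_iff_embedding_collapse (n1 n2 d : ℕ)
    (hn1 : 0 < n1) (hn2 : 0 < n2) (hd : 0 < d)
    (E1 : Fin n1 → EuclideanSpace ℝ (Fin d)) (E2 : Fin n2 → EuclideanSpace ℝ (Fin d))
    (M : Fin n1 → Fin n2 → ℝ) (hM : ∀ x y, M x y = ‖E1 x - E2 y‖ ^ 2)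
    (C1 : Fin n1 → Fin n1 → ℝ) (hC1 : ∀ x x', C1 x x' = ‖E1 x - E1 x'‖ ^ 2)
    (C2 : Fin n2 → Fin n2 → ℝ) (hC2 : ∀ y y', C2 y y' = ‖E2 y - E2 y'‖ ^ 2)
    (S : Fin n1 → Fin n2 → ℝ) (hS : ∀ x y, S x y > 0)
    (α : ℝ) (hα0 : 0 < α) (hα1 : α < 1) :
    (1 - α) * (∑ x : Fin n1, ∑ y : Fin n2, M x y * S x y) +
        α * (∑ x : Fin n1, ∑ x' : Fin n1, ∑ y : Fin n2, ∑ y' : Fin n2,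
          (C1 x x' - C2 y y') ^ 2 * S x y * S x' y') = 0 ↔
      ∀ x y, E1 x = E2 y :=
  fgw_zero_iff_embedding_collapse_general n1 n2 d E1 E2 M hM C1 hC1 C2 hC2 S hS α hα0 hα1
end

section
/- Let n1, n2 be positive integers, M : Fin n1 → Fin n2 → ℝ, C1 : Fin n1 → Fin n1 → ℝ, C2 : Fin n2 → Fin n2 → ℝ, S : Fin n1 → Fin n2 → ℝ, and α ∈ ℝ with α > 0. With K1 = ∑_{x,y} M x y, K2 = ∑_{x,x',y,y'} (C1 x x' − C2 y y')²·(S x y + S x' y'), K3 = ∑_{x,x',y,y'} (C1 x x' − C2 y y')², assume K3 > 0 and set λ* = ((1−α)·K1 + α·K2) / (2·α·K3). Then for every λ ∈ ℝ, J(λ) ≥ J(λ*), with equality if and only if λ = λ*, where J(λ) = (1−α)·∑_{x,y} M x y · (S x y − λ) + α·∑_{x,x',y,y'} (C1 x x' − C2 y y')² · (S x y − λ)·(S x' y' − λ). -/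
/-!
In `λ`, the objective is the quadratic `α K₃ λ² - ((1 - α) K₁ + α K₂) λ + const`: expanding the
products `(S x y - λ)(S x' y' - λ)` produces exactly the constants `K₂` and `K₃`. Its leading
coefficient `α K₃` is positive, so completing the square gives
`J λ - J λ* = α K₃ (λ - λ*)²`, and `λ*` is the unique minimizer.
-/

open Finset

section Expansion

variable {ι κ : Type*} [Fintype ι] [Fintype κ]

theorem sum_sum_mul_sub (w s : ι → κ → ℝ) (lam : ℝ) :
    ∑ x, ∑ y, w x y * (s x y - lam) = ∑ x, ∑ y, w x y * s x y - (∑ x, ∑ y, w x y) * lam := by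
  simp only [mul_sub, sum_sub_distrib, sum_mul]

theorem sum4_mul_sub_mul_sub (c : ι → ι → κ → κ → ℝ) (s : ι → κ → ℝ) (lam : ℝ) :
    ∑ x, ∑ x', ∑ y, ∑ y', c x x' y y' * (s x y - lam) * (s x' y' - lam) =
      ∑ x, ∑ x', ∑ y, ∑ y', c x x' y y' * s x y * s x' y'
        - (∑ x, ∑ x', ∑ y, ∑ y', c x x' y y' * (s x y + s x' y')) * lam
        + (∑ x, ∑ x', ∑ y, ∑ y', c x x' y y') * lam ^ 2 := by
  have expand : ∀ x x' y y', c x x' y y' * (s x y - lam) * (s x' y' - lam) =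
      c x x' y y' * s x y * s x' y' - c x x' y y' * (s x y + s x' y') * lam
        + c x x' y y' * lam ^ 2 := fun _ _ _ _ => by ring
  simp only [expand, sum_add_distrib, sum_sub_distrib, sum_mul]

end Expansion

theorem quadratic_sub_quadratic_vertex {a : ℝ} (ha : a ≠ 0) (b c lam : ℝ) :
    (a * lam ^ 2 - b * lam + c) - (a * (b / (2 * a)) ^ 2 - b * (b / (2 * a)) + c) =
      a * (lam - b / (2 * a)) ^ 2 := by
  field_simp
  ring

theorem le_and_eq_iff_of_sub_eq_mul_sq {f : ℝ → ℝ} {a μ : ℝ} (ha : 0 < a)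
    (hf : ∀ lam, f lam - f μ = a * (lam - μ) ^ 2) (lam : ℝ) :
    f μ ≤ f lam ∧ (f lam = f μ ↔ lam = μ) := by
  have hsq := hf lam
  refine ⟨by nlinarith [sq_nonneg (lam - μ)], ⟨fun h => ?_, fun h => h ▸ rfl⟩⟩
  rw [h, sub_self, eq_comm, mul_eq_zero, pow_eq_zero_iff two_ne_zero, sub_eq_zero] at hsq
  exact hsq.resolve_left ha.ne'

theorem closed_form_lambda_is_unique_minimizer_general (n1 n2 : ℕ)
    (M : Fin n1 → Fin n2 → ℝ) (C1 : Fin n1 → Fin n1 → ℝ) (C2 : Fin n2 → Fin n2 → ℝ)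
    (S : Fin n1 → Fin n2 → ℝ) (α : ℝ) (hα : α > 0)
    (K1 K2 K3 : ℝ)
    (hK1 : K1 = ∑ x : Fin n1, ∑ y : Fin n2, M x y)
    (hK2 : K2 = ∑ x : Fin n1, ∑ x' : Fin n1, ∑ y : Fin n2, ∑ y' : Fin n2,
      (C1 x x' - C2 y y') ^ 2 * (S x y + S x' y'))
    (hK3 : K3 = ∑ x : Fin n1, ∑ x' : Fin n1, ∑ y : Fin n2, ∑ y' : Fin n2,
      (C1 x x' - C2 y y') ^ 2)
    (hK3pos : K3 > 0)
    (lamStar : ℝ) (hlamStar : lamStar = ((1 - α) * K1 + α * K2) / (2 * α * K3))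
    (J : ℝ → ℝ)
    (hJ : ∀ lam : ℝ, J lam =
      (1 - α) * (∑ x : Fin n1, ∑ y : Fin n2, M x y * (S x y - lam)) +
        α * (∑ x : Fin n1, ∑ x' : Fin n1, ∑ y : Fin n2, ∑ y' : Fin n2,
          (C1 x x' - C2 y y') ^ 2 * (S x y - lam) * (S x' y' - lam))) :
    ∀ lam : ℝ, J lam ≥ J lamStar ∧ (J lam = J lamStar ↔ lam = lamStar) := by
  set a := α * K3
  set b := (1 - α) * K1 + α * K2
  obtain ⟨c, hc⟩ : ∃ c, ∀ lam, J lam = a * lam ^ 2 - b * lam + c := by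
    refine ⟨(1 - α) * ∑ x, ∑ y, M x y * S x y + α * ∑ x, ∑ x', ∑ y, ∑ y',
      (C1 x x' - C2 y y') ^ 2 * S x y * S x' y', fun lam => ?_⟩
    rw [hJ, sum_sum_mul_sub, sum4_mul_sub_mul_sub, ← hK1, ← hK2, ← hK3]
    ring
  have ha : 0 < a := mul_pos hα hK3pos
  have hvertex : lamStar = b / (2 * a) := by rw [hlamStar, mul_assoc]
  have hsub : ∀ lam, J lam - J lamStar = a * (lam - lamStar) ^ 2 := fun lam => by
    rw [hc, hc, hvertex, quadratic_sub_quadratic_vertex ha.ne']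
  exact le_and_eq_iff_of_sub_eq_mul_sq ha hsub

theorem closed_form_lambda_is_unique_minimizer (n1 n2 : ℕ) (hn1 : 0 < n1) (hn2 : 0 < n2)
    (M : Fin n1 → Fin n2 → ℝ) (C1 : Fin n1 → Fin n1 → ℝ) (C2 : Fin n2 → Fin n2 → ℝ)
    (S : Fin n1 → Fin n2 → ℝ) (α : ℝ) (hα : α > 0)
    (K1 K2 K3 : ℝ)
    (hK1 : K1 = ∑ x : Fin n1, ∑ y : Fin n2, M x y)
    (hK2 : K2 = ∑ x : Fin n1, ∑ x' : Fin n1, ∑ y : Fin n2, ∑ y' : Fin n2,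
      (C1 x x' - C2 y y') ^ 2 * (S x y + S x' y'))
    (hK3 : K3 = ∑ x : Fin n1, ∑ x' : Fin n1, ∑ y : Fin n2, ∑ y' : Fin n2,
      (C1 x x' - C2 y y') ^ 2)
    (hK3pos : K3 > 0)
    (lamStar : ℝ) (hlamStar : lamStar = ((1 - α) * K1 + α * K2) / (2 * α * K3))
    (J : ℝ → ℝ)
    (hJ : ∀ lam : ℝ, J lam =
      (1 - α) * (∑ x : Fin n1, ∑ y : Fin n2, M x y * (S x y - lam)) +
        α * (∑ x : Fin n1, ∑ x' : Fin n1, ∑ y : Fin n2, ∑ y' : Fin n2,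
          (C1 x x' - C2 y y') ^ 2 * (S x y - lam) * (S x' y' - lam))) :
    ∀ lam : ℝ, J lam ≥ J lamStar ∧ (J lam = J lamStar ↔ lam = lamStar) :=
  closed_form_lambda_is_unique_minimizer_general n1 n2 M C1 C2 S α hα K1 K2 K3 hK1 hK2 hK3 hK3pos
    lamStar hlamStar J hJ
end

section
/- Let n1, n2 be positive integers, M : Fin n1 → Fin n2 → ℝ with M x y ≥ 0 for all x, y, C1 : Fin n1 → Fin n1 → ℝ, C2 : Fin n2 → Fin n2 → ℝ, S : Fin n1 → Fin n2 → ℝ with S x y ≥ 0 for all x, y, and α ∈ ℝ with 0 < α ≤ 1. With K1 = ∑_{x,y} M x y, K2 = ∑_{x,x',y,y'} (C1 x x' − C2 y y')²·(S x y + S x' y'), K3 = ∑_{x,x',y,y'} (C1 x x' − C2 y y')², assume K3 > 0. Then for every λ ∈ ℝ, J(λ) ≥ −((1−α)·K1 + α·K2)² / (4·α·K3), where J(λ) = (1−α)·∑_{x,y} M x y · (S x y − λ) + α·∑_{x,x',y,y'} (C1 x x' − C2 y y')² · (S x y − λ)·(S x' y' − λ). -/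
/-!
Expanding the products shows that `J` is the quadratic polynomial
`J 0 - ((1 - α) K1 + α K2) λ + α K3 λ²` in `λ`. Its leading coefficient `α K3` is positive and its
constant term `J 0 = (1 - α) ∑ M S + α ∑ (C1 - C2)² S S` is nonnegative, so completing the square
bounds it below by `-((1 - α) K1 + α K2)² / (4 α K3)`.
-/

open Finset

theorem neg_sq_div_le_quadratic {a b c : ℝ} (ha : 0 < a) (hc : 0 ≤ c) (x : ℝ) :
    -b ^ 2 / (4 * a) ≤ c - b * x + a * x ^ 2 := by
  rw [div_le_iff₀ (by positivity)]
  nlinarith [sq_nonneg (2 * a * x - b), mul_nonneg ha.le hc]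

section Expansion

variable {ι κ : Type*} [Fintype ι] [Fintype κ]

theorem sum_sum_mul_sub_const (M S : ι → κ → ℝ) (t : ℝ) :
    ∑ x, ∑ y, M x y * (S x y - t) = ∑ x, ∑ y, M x y * S x y - (∑ x, ∑ y, M x y) * t := by
  simp only [mul_sub, sum_sub_distrib, sum_mul]

theorem sum_gw_mul_sub_const_mul_sub_const (C1 : ι → ι → ℝ) (C2 : κ → κ → ℝ) (S : ι → κ → ℝ)
    (t : ℝ) :
    ∑ x, ∑ x', ∑ y, ∑ y', (C1 x x' - C2 y y') ^ 2 * (S x y - t) * (S x' y' - t) =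
      ∑ x, ∑ x', ∑ y, ∑ y', (C1 x x' - C2 y y') ^ 2 * S x y * S x' y'
        - (∑ x, ∑ x', ∑ y, ∑ y', (C1 x x' - C2 y y') ^ 2 * (S x y + S x' y')) * t
        + (∑ x, ∑ x', ∑ y, ∑ y', (C1 x x' - C2 y y') ^ 2) * t ^ 2 := by
  have expand : ∀ w u v : ℝ, w * (u - t) * (v - t) = w * u * v - w * (u + v) * t + w * t ^ 2 :=
    fun _ _ _ => by ring
  simp only [expand, sum_add_distrib, sum_sub_distrib, sum_mul]

theorem sum_sum_mul_nonneg {M S : ι → κ → ℝ} (hM : ∀ x y, 0 ≤ M x y) (hS : ∀ x y, 0 ≤ S x y) :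
    0 ≤ ∑ x, ∑ y, M x y * S x y :=
  sum_nonneg fun x _ => sum_nonneg fun y _ => mul_nonneg (hM x y) (hS x y)

theorem sum_gw_mul_nonneg (C1 : ι → ι → ℝ) (C2 : κ → κ → ℝ) {S : ι → κ → ℝ}
    (hS : ∀ x y, 0 ≤ S x y) :
    0 ≤ ∑ x, ∑ x', ∑ y, ∑ y', (C1 x x' - C2 y y') ^ 2 * S x y * S x' y' :=
  sum_nonneg fun x _ => sum_nonneg fun x' _ => sum_nonneg fun y _ => sum_nonneg fun y' _ =>
    mul_nonneg (mul_nonneg (sq_nonneg _) (hS x y)) (hS x' y')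

end Expansion

theorem objective_lower_bound_general (n1 n2 : ℕ)
    (M : Fin n1 → Fin n2 → ℝ) (hM : ∀ x y, M x y ≥ 0)
    (C1 : Fin n1 → Fin n1 → ℝ) (C2 : Fin n2 → Fin n2 → ℝ)
    (S : Fin n1 → Fin n2 → ℝ) (hS : ∀ x y, S x y ≥ 0)
    (α : ℝ) (hα0 : 0 < α) (hα1 : α ≤ 1)
    (K1 K2 K3 : ℝ)
    (hK1 : K1 = ∑ x : Fin n1, ∑ y : Fin n2, M x y)
    (hK2 : K2 = ∑ x : Fin n1, ∑ x' : Fin n1, ∑ y : Fin n2, ∑ y' : Fin n2,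
      (C1 x x' - C2 y y') ^ 2 * (S x y + S x' y'))
    (hK3 : K3 = ∑ x : Fin n1, ∑ x' : Fin n1, ∑ y : Fin n2, ∑ y' : Fin n2,
      (C1 x x' - C2 y y') ^ 2)
    (hK3pos : K3 > 0)
    (J : ℝ → ℝ)
    (hJ : ∀ lam : ℝ, J lam =
      (1 - α) * (∑ x : Fin n1, ∑ y : Fin n2, M x y * (S x y - lam)) +
        α * (∑ x : Fin n1, ∑ x' : Fin n1, ∑ y : Fin n2, ∑ y' : Fin n2,
          (C1 x x' - C2 y y') ^ 2 * (S x y - lam) * (S x' y' - lam))) :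
    ∀ lam : ℝ, J lam ≥ -(((1 - α) * K1 + α * K2) ^ 2) / (4 * α * K3) := by
  intro lam
  set A := ∑ x, ∑ y, M x y * S x y
  set Q := ∑ x, ∑ x', ∑ y, ∑ y', (C1 x x' - C2 y y') ^ 2 * S x y * S x' y'
  have hJ_quadratic : J lam = ((1 - α) * A + α * Q) - ((1 - α) * K1 + α * K2) * lam
      + α * K3 * lam ^ 2 := by
    rw [hJ, sum_sum_mul_sub_const, sum_gw_mul_sub_const_mul_sub_const, hK1, hK2, hK3]
    ring
  have hJ0_nonneg : 0 ≤ (1 - α) * A + α * Q :=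
    add_nonneg (mul_nonneg (sub_nonneg.2 hα1) (sum_sum_mul_nonneg hM hS))
      (mul_nonneg hα0.le (sum_gw_mul_nonneg C1 C2 hS))
  rw [hJ_quadratic, ge_iff_le, mul_assoc 4]
  exact neg_sq_div_le_quadratic (mul_pos hα0 hK3pos) hJ0_nonneg lam

theorem objective_lower_bound (n1 n2 : ℕ) (hn1 : 0 < n1) (hn2 : 0 < n2)
    (M : Fin n1 → Fin n2 → ℝ) (hM : ∀ x y, M x y ≥ 0)
    (C1 : Fin n1 → Fin n1 → ℝ) (C2 : Fin n2 → Fin n2 → ℝ)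
    (S : Fin n1 → Fin n2 → ℝ) (hS : ∀ x y, S x y ≥ 0)
    (α : ℝ) (hα0 : 0 < α) (hα1 : α ≤ 1)
    (K1 K2 K3 : ℝ)
    (hK1 : K1 = ∑ x : Fin n1, ∑ y : Fin n2, M x y)
    (hK2 : K2 = ∑ x : Fin n1, ∑ x' : Fin n1, ∑ y : Fin n2, ∑ y' : Fin n2,
      (C1 x x' - C2 y y') ^ 2 * (S x y + S x' y'))
    (hK3 : K3 = ∑ x : Fin n1, ∑ x' : Fin n1, ∑ y : Fin n2, ∑ y' : Fin n2,
      (C1 x x' - C2 y y') ^ 2)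
    (hK3pos : K3 > 0)
    (J : ℝ → ℝ)
    (hJ : ∀ lam : ℝ, J lam =
      (1 - α) * (∑ x : Fin n1, ∑ y : Fin n2, M x y * (S x y - lam)) +
        α * (∑ x : Fin n1, ∑ x' : Fin n1, ∑ y : Fin n2, ∑ y' : Fin n2,
          (C1 x x' - C2 y y') ^ 2 * (S x y - lam) * (S x' y' - lam))) :
    ∀ lam : ℝ, J lam ≥ -(((1 - α) * K1 + α * K2) ^ 2) / (4 * α * K3) :=
  objective_lower_bound_general n1 n2 M hM C1 C2 S hS α hα0 hα1 K1 K2 K3 hK1 hK2 hK3 hK3pos J hJ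
end

section
/- Let n1 and n2 be positive integers, C1 : Matrix (Fin n1) (Fin n1) ℝ, C2 : Matrix (Fin n2) (Fin n2) ℝ, and T : Matrix (Fin n1) (Fin n2) ℝ. Then ∑_{x,x' ∈ Fin n1} ∑_{y,y' ∈ Fin n2} (C1 x x' − C2 y y')² · T x y · T x' y' = ∑_{x,y} L x y · T x y, where L = (C1 ⊙ C1) * T * 1_{n2×n2} + 1_{n1×n1} * T * (C2 ⊙ C2)ᵀ − 2 • (C1 * T * C2ᵀ), with ⊙ denoting the entrywise (Hadamard) product, * matrix multiplication, 1_{n×m} the all-ones matrix, and ᵀ the transpose. -/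
/-! Expanding the square splits the fourth-order sum into three sums of the form
`∑ A x x' * T x' y' * B y' y * T x y`, and each of these is the Frobenius pairing of
`A * T * B` with `T`: for `(A, B) = (C1 ⊙ C1, 1)`, `(1, (C2 ⊙ C2)ᵀ)` and `(C1, C2ᵀ)`. -/

open Finset

namespace Matrix

variable {m n R : Type*} [Fintype m] [Fintype n] [CommSemiring R]

theorem sum_mul_mul_apply_mul (A : Matrix m m R) (T : Matrix m n R) (B : Matrix n n R) :
    ∑ x, ∑ y, (A * T * B) x y * T x y =
      ∑ x, ∑ x', ∑ y, ∑ y', A x x' * T x' y' * B y' y * T x y := by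
  simp only [mul_apply, sum_mul]
  exact sum_congr rfl fun x _ => (sum_congr rfl fun y _ => sum_comm).trans sum_comm

end Matrix

open Matrix in
theorem gw_quadratic_form_decomposition_general (n1 n2 : ℕ)
    (C1 : Matrix (Fin n1) (Fin n1) ℝ) (C2 : Matrix (Fin n2) (Fin n2) ℝ)
    (T : Matrix (Fin n1) (Fin n2) ℝ)
    (ones1 : Matrix (Fin n1) (Fin n1) ℝ) (hones1 : ∀ i j, ones1 i j = 1)
    (ones2 : Matrix (Fin n2) (Fin n2) ℝ) (hones2 : ∀ i j, ones2 i j = 1)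
    (L : Matrix (Fin n1) (Fin n2) ℝ)
    (hL : L = Matrix.hadamard C1 C1 * T * ones2 + ones1 * T * (Matrix.hadamard C2 C2)ᵀ
      - (2 : ℝ) • (C1 * T * C2ᵀ)) :
    (∑ x : Fin n1, ∑ x' : Fin n1, ∑ y : Fin n2, ∑ y' : Fin n2,
        (C1 x x' - C2 y y') ^ 2 * T x y * T x' y') =
      ∑ x : Fin n1, ∑ y : Fin n2, L x y * T x y := by
  subst hL
  simp only [Matrix.sub_apply, Matrix.add_apply, Matrix.smul_apply, smul_eq_mul, sub_mul,
    add_mul, mul_assoc (2 : ℝ), sum_sub_distrib, sum_add_distrib, ← mul_sum,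
    sum_mul_mul_apply_mul, hadamard_apply, transpose_apply, hones1, hones2]
  simp only [mul_sum, ← sum_add_distrib, ← sum_sub_distrib]
  refine sum_congr rfl fun x _ => sum_congr rfl fun x' _ => sum_congr rfl fun y _ =>
    sum_congr rfl fun y' _ => ?_
  ring

open Matrix in
theorem gw_quadratic_form_decomposition (n1 n2 : ℕ) (hn1 : 0 < n1) (hn2 : 0 < n2)
    (C1 : Matrix (Fin n1) (Fin n1) ℝ) (C2 : Matrix (Fin n2) (Fin n2) ℝ)
    (T : Matrix (Fin n1) (Fin n2) ℝ)
    (ones1 : Matrix (Fin n1) (Fin n1) ℝ) (hones1 : ∀ i j, ones1 i j = 1)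
    (ones2 : Matrix (Fin n2) (Fin n2) ℝ) (hones2 : ∀ i j, ones2 i j = 1)
    (L : Matrix (Fin n1) (Fin n2) ℝ)
    (hL : L = Matrix.hadamard C1 C1 * T * ones2 + ones1 * T * (Matrix.hadamard C2 C2)ᵀ
      - (2 : ℝ) • (C1 * T * C2ᵀ)) :
    (∑ x : Fin n1, ∑ x' : Fin n1, ∑ y : Fin n2, ∑ y' : Fin n2,
        (C1 x x' - C2 y y') ^ 2 * T x y * T x' y') =
      ∑ x : Fin n1, ∑ y : Fin n2, L x y * T x y :=
  gw_quadratic_form_decomposition_general n1 n2 C1 C2 T ones1 hones1 ones2 hones2 L hL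
end
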